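/- Let α ∈ (1,2), p ∈ (1,α), c > 0, b > 0, a₀ ∈ ℝ, and suppose F belongs to the class S_b, satisfies z F'(z) + (c/(α−1)) ∫₀^z F''(x) (z−x)^{1−α} dx − p F(z) = 0 for all z ∈ (0,b], and F(0) = a₀. Define φ(z) = ∫₀^z F''(x) (z−x)^{1−α} dx for z ∈ (0,b]. Then φ satisfies the Volterra integral equation of the second kind ∫₀^z K(z,x) φ(x) dx + φ(z) = p(α−1)a₀/c for all z ∈ (0,b], where the weakly singular kernel K is given by K(z,x) = ((α−1)/(c Γ(α) Γ(2−α))) · ((α−1−p)z + p x)/(z−x)^{2−α} for 0 < x < z ≤ b. -/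

import Mathlib

/-!
Write `g = F''`, which is integrable on `(0, z]` because `g(t) = O(t^(α-2))` and `α - 2 > -1`.
Since `|K(z,x)| ≲ (z-x)^(α-2)` and `∫ₜᶻ (x-t)^(1-α) (z-x)^(α-2) dx = Γ(2-α) Γ(α-1)` does not
depend on `t`, Fubini applies on the triangle `0 < t < x ≤ z` and turns `∫₀ᶻ K(z,x) φ(x) dx` into
`∫₀ᶻ g(t) ∫ₜᶻ K(z,x) (x-t)^(1-α) dx dt`. Splitting `(α-1-p) z + p x = ((α-1-p) z + p t) + p (x-t)`,
the inner integral is a sum of two Beta integrals and equals `((α-1)/c) (z - p (z-t))`.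
Integrating this against `g`, with `∫₀ᶻ g = F'(z)` and Taylor's formula
`∫₀ᶻ (z-t) g(t) dt = F(z) - F(0) - z F'(0)` (both using `F'(0) = 0`), gives
`((α-1)/c) (z F'(z) - p (F(z) - a₀))`, while the equation for `F` says
`φ(z) = ((α-1)/c) (p F(z) - z F'(z))`. The sum is `p (α-1) a₀ / c`.
-/

open Set Filter MeasureTheory Asymptotics Topology

noncomputable section

/-- The class `S_b`: `F` is continuously differentiable on `[0,b]`, twice continuously
differentiable on `(0,b]`, `|F''(z)| = O(z^(α-2))` as `z ↓ 0`, and `F'(0) = 0`. -/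
def MemS (α b : ℝ) (F : ℝ → ℝ) : Prop :=
  (∀ z ∈ Set.Icc (0:ℝ) b, DifferentiableAt ℝ F z) ∧
  ContinuousOn (deriv F) (Set.Icc 0 b) ∧
  (∀ z ∈ Set.Ioc (0:ℝ) b, DifferentiableAt ℝ (deriv F) z) ∧
  ContinuousOn (deriv (deriv F)) (Set.Ioc 0 b) ∧
  (deriv (deriv F)) =O[𝓝[>] (0:ℝ)] (fun z => z ^ (α - 2)) ∧
  deriv F 0 = 0

/-- The fractional integro-differential equation
`z F'(z) + (c/(α−1)) ∫₀^z F''(x) (z−x)^{1−α} dx − p F(z) = 0`. -/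
def FracDE (α p c : ℝ) (F : ℝ → ℝ) (z : ℝ) : Prop :=
  z * deriv F z
      + (c / (α - 1)) * (∫ x in (0:ℝ)..z, deriv (deriv F) x * (z - x) ^ (1 - α))
      - p * F z = 0

theorem integral_rpow_mul_sub_rpow {r s a : ℝ} (hr : -1 < r) (hs : -1 < s) (ha : 0 < a) :
    ∫ x in (0:ℝ)..a, x ^ r * (a - x) ^ s
      = a ^ (r + s + 1) * (Real.Gamma (r + 1) * Real.Gamma (s + 1) / Real.Gamma (r + s + 2)) := by
  apply Complex.ofReal_injective
  have hbeta := Complex.betaIntegral_scaled (r + 1) (s + 1) ha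
  rw [Complex.betaIntegral_eq_Gamma_mul_div _ _ (by simp; linarith) (by simp; linarith)] at hbeta
  rw [← intervalIntegral.integral_ofReal]
  convert hbeta using 1
  · refine intervalIntegral.integral_congr fun x hx => ?_
    rw [uIcc_of_le ha.le] at hx
    push_cast
    rw [Complex.ofReal_cpow hx.1, Complex.ofReal_cpow (sub_nonneg.2 hx.2)]
    push_cast
    ring_nf
  · rw [Complex.ofReal_mul, Complex.ofReal_cpow ha.le, Complex.ofReal_div, Complex.ofReal_mul,
      ← Complex.Gamma_ofReal, ← Complex.Gamma_ofReal, ← Complex.Gamma_ofReal]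
    push_cast
    ring_nf

theorem intervalIntegrable_rpow_mul_sub_rpow {r s a : ℝ} (hr : -1 < r) (hs : -1 < s) (ha : 0 < a) :
    IntervalIntegrable (fun x => x ^ r * (a - x) ^ s) volume 0 a := by
  have hm : 0 ≤ a / 2 := by positivity
  refine IntervalIntegrable.trans (b := a / 2) ?_ ?_
  · refine (intervalIntegral.intervalIntegrable_rpow' hr).mul_continuousOn
      (ContinuousOn.rpow_const (by fun_prop) fun x hx => Or.inl ?_)
    rw [uIcc_of_le hm] at hx
    linarith [hx.2]
  · have h := (intervalIntegral.intervalIntegrable_rpow' hs (a := 0) (b := a / 2)).comp_sub_left a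
    simp only [sub_zero, show a - a / 2 = a / 2 by ring] at h
    refine h.symm.continuousOn_mul (ContinuousOn.rpow_const (by fun_prop) fun x hx => Or.inl ?_)
    rw [uIcc_of_le (by linarith)] at hx
    linarith [hx.1]

theorem integral_sub_rpow_mul_sub_rpow {r s t z : ℝ} (hr : -1 < r) (hs : -1 < s) (htz : t < z) :
    ∫ x in t..z, (x - t) ^ r * (z - x) ^ s
      = (z - t) ^ (r + s + 1) *
        (Real.Gamma (r + 1) * Real.Gamma (s + 1) / Real.Gamma (r + s + 2)) := by
  have h := intervalIntegral.integral_comp_sub_right (a := t) (b := z)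
    (fun x => x ^ r * (z - t - x) ^ s) t
  simp only [sub_self, sub_sub_sub_cancel_right] at h
  rw [h, integral_rpow_mul_sub_rpow hr hs (sub_pos.2 htz)]

theorem intervalIntegrable_sub_rpow_mul_sub_rpow {r s t z : ℝ} (hr : -1 < r) (hs : -1 < s)
    (htz : t < z) : IntervalIntegrable (fun x => (x - t) ^ r * (z - x) ^ s) volume t z := by
  have h := (intervalIntegrable_rpow_mul_sub_rpow hr hs (sub_pos.2 htz)).comp_sub_right t
  simpa only [zero_add, sub_add_cancel, sub_sub_sub_cancel_right] using h

theorem intervalIntegrable_of_isBigO_rpow {g : ℝ → ℝ} {a z : ℝ} (ha : -1 < a) (hz : 0 < z)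
    (hg : ContinuousOn g (Ioc 0 z)) (hO : g =O[𝓝[>] 0] fun t => t ^ a) :
    IntervalIntegrable g volume 0 z := by
  rw [intervalIntegrable_iff_integrableOn_Ioc_of_le hz.le]
  have hmeas : StronglyMeasurableAtFilter g (𝓝[>] 0) := by
    simpa only [nhdsWithin_Ioc_eq_nhdsGT hz] using
      hg.stronglyMeasurableAtFilter_nhdsWithin measurableSet_Ioc 0
  have hpow : IntegrableAtFilter (fun t : ℝ => t ^ a) (𝓝[>] 0) :=
    ⟨Ioc 0 z, Ioc_mem_nhdsGT hz, (intervalIntegrable_iff_integrableOn_Ioc_of_le hz.le).1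
      (intervalIntegral.intervalIntegrable_rpow' ha)⟩
  obtain ⟨s, hs, hgs⟩ := hO.integrableAtFilter hmeas hpow
  obtain ⟨δ, hδ : 0 < δ, hδs⟩ := mem_nhdsGT_iff_exists_Ioo_subset.1 hs
  have hε : 0 < min δ z / 2 := by positivity
  have hcover : Ioc 0 z ⊆ Ioo 0 δ ∪ Icc (min δ z / 2) z := fun x hx => by
    by_cases hxδ : x < δ
    · exact Or.inl ⟨hx.1, hxδ⟩
    · exact Or.inr ⟨by linarith [min_le_left δ z], hx.2⟩
  refine ((hgs.mono_set hδs).union ?_).mono_set hcover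
  exact (hg.mono fun x hx => ⟨hε.trans_le hx.1, hx.2⟩).integrableOn_Icc

theorem integral_sub_mul_deriv_deriv {F : ℝ → ℝ} {a b : ℝ} (hab : a ≤ b)
    (hF : ∀ x ∈ Icc a b, DifferentiableAt ℝ F x) (hF' : ContinuousOn (deriv F) (Icc a b))
    (hF'' : ∀ x ∈ Ioo a b, DifferentiableAt ℝ (deriv F) x)
    (hint : IntervalIntegrable (deriv (deriv F)) volume a b) :
    ∫ t in a..b, (b - t) * deriv (deriv F) t = F b - F a - (b - a) * deriv F a := by
  have hcont : ContinuousOn (fun t => (b - t) * deriv F t + F t) (Icc a b) :=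
    ((continuousOn_const.sub continuousOn_id).mul hF').add
      fun x hx => (hF x hx).continuousAt.continuousWithinAt
  have hderiv : ∀ x ∈ Ioo a b,
      HasDerivAt (fun t => (b - t) * deriv F t + F t) ((b - x) * deriv (deriv F) x) x := by
    intro x hx
    refine ((((hasDerivAt_id' x).const_sub b).mul (hF'' x hx).hasDerivAt).add
      (hF x (Ioo_subset_Icc_self hx)).hasDerivAt).congr_deriv ?_
    ring
  have hint' : IntervalIntegrable (fun t => (b - t) * deriv (deriv F) t) volume a b :=
    hint.continuousOn_mul (by fun_prop)
  rw [intervalIntegral.integral_eq_sub_of_hasDerivAt_of_le hab hcont hderiv hint']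
  ring

def triangle (a b : ℝ) : Set (ℝ × ℝ) := {p | a < p.2 ∧ p.2 < p.1 ∧ p.1 ≤ b}

theorem measurableSet_triangle (a b : ℝ) : MeasurableSet (triangle a b) :=
  (measurableSet_lt measurable_const measurable_snd).inter
    ((measurableSet_lt measurable_snd measurable_fst).inter
      (measurableSet_le measurable_fst measurable_const))

section Triangle

variable {E : Type*} [NormedAddCommGroup E] {a b : ℝ}

theorem triangle_indicator_row (F : ℝ × ℝ → E) (x : ℝ) :
    (fun t => (triangle a b).indicator F (x, t))
      = if x ∈ Ioc a b then (Ioo a x).indicator (fun t => F (x, t)) else 0 := by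
  ext t
  split_ifs with hx
  · simp only [indicator_apply, triangle, mem_ofPred_eq, mem_Ioo, hx.2, and_true]
  · simp only [indicator_apply, triangle, mem_ofPred_eq, Pi.zero_apply, ite_eq_right_iff]
    exact fun h => absurd ⟨h.1.trans h.2.1, h.2.2⟩ hx

theorem triangle_indicator_col (F : ℝ × ℝ → E) (t : ℝ) :
    (fun x => (triangle a b).indicator F (x, t))
      = if t ∈ Ioo a b then (Ioc t b).indicator (fun x => F (x, t)) else 0 := by
  ext x
  split_ifs with ht
  · simp only [indicator_apply, triangle, mem_ofPred_eq, mem_Ioc, ht.1, true_and]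
  · simp only [indicator_apply, triangle, mem_ofPred_eq, Pi.zero_apply, ite_eq_right_iff]
    exact fun h => absurd ⟨h.1, h.2.1.trans_le h.2.2⟩ ht

end Triangle

theorem integral_integral_swap_triangle {E : Type*} [NormedAddCommGroup E] [NormedSpace ℝ E]
    {a b : ℝ} (hab : a ≤ b) {f : ℝ → ℝ → E}
    (hf : IntegrableOn (Function.uncurry f) (triangle a b)) :
    ∫ x in a..b, ∫ t in a..x, f x t = ∫ t in a..b, ∫ x in t..b, f x t := by
  have hint : Integrable ((triangle a b).indicator (Function.uncurry f)) (volume.prod volume) := by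
    rw [← Measure.volume_eq_prod]
    exact (integrable_indicator_iff (measurableSet_triangle a b)).2 hf
  have hrow : ∀ x, ∫ t, (triangle a b).indicator (Function.uncurry f) (x, t)
      = (Ioc a b).indicator (fun x => ∫ t in a..x, f x t) x := by
    intro x
    rw [triangle_indicator_row]
    split_ifs with hx
    · rw [indicator_of_mem hx, integral_indicator measurableSet_Ioo, ← integral_Ioc_eq_integral_Ioo,
        ← intervalIntegral.integral_of_le hx.1.le]
      rfl
    · rw [indicator_of_notMem hx, integral_zero']
  have hcol : ∀ t, ∫ x, (triangle a b).indicator (Function.uncurry f) (x, t)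
      = (Ioo a b).indicator (fun t => ∫ x in t..b, f x t) t := by
    intro t
    rw [triangle_indicator_col]
    split_ifs with ht
    · rw [indicator_of_mem ht, integral_indicator measurableSet_Ioc,
        ← intervalIntegral.integral_of_le ht.2.le]
      rfl
    · rw [indicator_of_notMem ht, integral_zero']
  calc ∫ x in a..b, ∫ t in a..x, f x t
      = ∫ x, ∫ t, (triangle a b).indicator (Function.uncurry f) (x, t) := by
        rw [intervalIntegral.integral_of_le hab, ← integral_indicator measurableSet_Ioc]
        exact integral_congr_ae (ae_of_all _ fun x => (hrow x).symm)
    _ = ∫ t, ∫ x, (triangle a b).indicator (Function.uncurry f) (x, t) :=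
        integral_integral_swap hint
    _ = ∫ t in a..b, ∫ x in t..b, f x t := by
        rw [intervalIntegral.integral_of_le hab, integral_Ioc_eq_integral_Ioo,
          ← integral_indicator measurableSet_Ioo]
        exact integral_congr_ae (ae_of_all _ hcol)

theorem integrableOn_triangle_mul {a b M : ℝ} {k w : ℝ → ℝ → ℝ} {g : ℝ → ℝ}
    (hk : Measurable (Function.uncurry k)) (hg : IntegrableOn g (Ioc a b))
    (hkw : ∀ t ∈ Ioo a b, ∀ x ∈ Ioc t b, |k x t| ≤ w x t)
    (hw_int : ∀ t ∈ Ioo a b, IntegrableOn (fun x => w x t) (Ioc t b))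
    (hw_le : ∀ t ∈ Ioo a b, ∫ x in Ioc t b, w x t ≤ M) :
    IntegrableOn (fun p : ℝ × ℝ => k p.1 p.2 * g p.2) (triangle a b) := by
  set F : ℝ × ℝ → ℝ := fun p => k p.1 p.2 * g p.2
  have hk_int : ∀ t ∈ Ioo a b, IntegrableOn (fun x => k x t) (Ioc t b) := fun t ht =>
    (hw_int t ht).mono' (hk.comp (measurable_id.prodMk measurable_const)).aestronglyMeasurable
      ((ae_restrict_iff' measurableSet_Ioc).2 (ae_of_all _ (hkw t ht)))
  have hk_le : ∀ t ∈ Ioo a b, ∫ x in Ioc t b, |k x t| ≤ M := fun t ht =>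
    (setIntegral_mono_on (hk_int t ht).abs (hw_int t ht) measurableSet_Ioc (hkw t ht)).trans
      (hw_le t ht)
  have hg_snd : AEStronglyMeasurable (fun p : ℝ × ℝ => g p.2)
      ((volume.prod volume).restrict (triangle a b)) := by
    have h := hg.aestronglyMeasurable.comp_snd (μ := (volume : Measure ℝ))
    have e := Measure.prod_restrict (μ := (volume : Measure ℝ)) (ν := volume) univ (Ioc a b)
    rw [Measure.restrict_univ] at e
    rw [e] at h
    refine h.mono_measure (Measure.restrict_mono (fun p (hp : p ∈ triangle a b) => ?_) le_rfl)
    exact ⟨mem_univ _, hp.1, hp.2.1.le.trans hp.2.2⟩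
  have hF : AEStronglyMeasurable ((triangle a b).indicator F) (volume.prod volume) :=
    (aestronglyMeasurable_indicator_iff (measurableSet_triangle a b)).2
      (hk.aestronglyMeasurable.mul hg_snd)
  have hslice : ∀ t, ∫ x, ‖(triangle a b).indicator F (x, t)‖
      = (Ioo a b).indicator (fun t => (∫ x in Ioc t b, |k x t|) * |g t|) t := by
    intro t
    simp_rw [norm_indicator_eq_indicator_norm]
    rw [triangle_indicator_col]
    split_ifs with ht
    · rw [indicator_of_mem ht, integral_indicator measurableSet_Ioc, ← integral_mul_const]
      simp only [F, Real.norm_eq_abs, abs_mul]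
    · rw [indicator_of_notMem ht, integral_zero']
  rw [← integrable_indicator_iff (measurableSet_triangle a b), Measure.volume_eq_prod,
    integrable_prod_iff' hF]
  constructor
  · refine ae_of_all _ fun t => ?_
    rw [triangle_indicator_col]
    split_ifs with ht
    · exact (integrable_indicator_iff measurableSet_Ioc).2 ((hk_int t ht).mul_const (g t))
    · exact integrable_zero _ _ _
  · refine (IntegrableOn.integrable_indicator
      ((hg.mono_set Ioo_subset_Ioc_self).norm.const_mul M) measurableSet_Ioo).mono'
      hF.norm.prod_swap.integral_prod_right' (ae_of_all _ fun t => ?_)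
    rw [hslice t]
    by_cases ht : t ∈ Ioo a b
    · rw [indicator_of_mem ht, indicator_of_mem ht, Real.norm_eq_abs,
        abs_of_nonneg (by positivity)]
      exact mul_le_mul_of_nonneg_right (hk_le t ht) (abs_nonneg _)
    · simp [indicator_of_notMem ht]

theorem integral_integral_mul_swap {a b M : ℝ} (hab : a ≤ b) {k w : ℝ → ℝ → ℝ} {g : ℝ → ℝ}
    (hk : Measurable (Function.uncurry k)) (hg : IntegrableOn g (Ioc a b))
    (hkw : ∀ t ∈ Ioo a b, ∀ x ∈ Ioc t b, |k x t| ≤ w x t)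
    (hw_int : ∀ t ∈ Ioo a b, IntegrableOn (fun x => w x t) (Ioc t b))
    (hw_le : ∀ t ∈ Ioo a b, ∫ x in Ioc t b, w x t ≤ M) :
    ∫ x in a..b, ∫ t in a..x, k x t * g t = ∫ t in a..b, (∫ x in t..b, k x t) * g t := by
  rw [integral_integral_swap_triangle (f := fun x t => k x t * g t) hab
    (integrableOn_triangle_mul hk hg hkw hw_int hw_le)]
  simp_rw [intervalIntegral.integral_mul_const]

def volterraKernel (α p c z x : ℝ) : ℝ :=
  ((α - 1) / (c * Real.Gamma α * Real.Gamma (2 - α))) *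
    (((α - 1 - p) * z + p * x) / (z - x) ^ (2 - α))

section VolterraKernel

variable {α p c t z x : ℝ}

theorem volterraKernel_eq (hxz : x ≤ z) :
    volterraKernel α p c z x
      = (α - 1) / (c * Real.Gamma α * Real.Gamma (2 - α)) * ((α - 1 - p) * z + p * x)
        * (z - x) ^ (α - 2) := by
  rw [volterraKernel, div_eq_mul_inv _ ((z - x) ^ (2 - α)), ← Real.rpow_neg (sub_nonneg.2 hxz),
    neg_sub]
  ring

theorem integral_sub_rpow_one_sub_mul_sub_rpow (hα : α ∈ Ioo 1 2) (htz : t < z) :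
    ∫ x in t..z, (x - t) ^ (1 - α) * (z - x) ^ (α - 2)
      = Real.Gamma (2 - α) * Real.Gamma (α - 1) := by
  rw [integral_sub_rpow_mul_sub_rpow (by linarith [hα.2]) (by linarith [hα.1]) htz,
    show 1 - α + (α - 2) + 1 = 0 by ring, show 1 - α + 1 = 2 - α by ring,
    show α - 2 + 1 = α - 1 by ring, show 1 - α + (α - 2) + 2 = 1 by ring,
    Real.rpow_zero, Real.Gamma_one, div_one, one_mul]

theorem integral_sub_rpow_two_sub_mul_sub_rpow (hα : α ∈ Ioo 1 2) (htz : t < z) :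
    ∫ x in t..z, (x - t) ^ (2 - α) * (z - x) ^ (α - 2)
      = (z - t) * ((2 - α) * Real.Gamma (2 - α) * Real.Gamma (α - 1)) := by
  rw [integral_sub_rpow_mul_sub_rpow (by linarith [hα.2]) (by linarith [hα.1]) htz,
    show 2 - α + (α - 2) + 1 = 1 by ring, show α - 2 + 1 = α - 1 by ring,
    show 2 - α + (α - 2) + 2 = 2 by ring, Real.Gamma_add_one (by linarith [hα.2]),
    Real.rpow_one, Real.Gamma_two, div_one, mul_assoc]

theorem integral_volterraKernel_mul_rpow (hα : α ∈ Ioo 1 2) (htz : t < z) :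
    ∫ x in t..z, volterraKernel α p c z x * (x - t) ^ (1 - α)
      = (α - 1) / c * (z - p * (z - t)) := by
  set C := (α - 1) / (c * Real.Gamma α * Real.Gamma (2 - α))
  have hsplit : ∀ x ∈ uIcc t z, volterraKernel α p c z x * (x - t) ^ (1 - α)
      = C * ((α - 1 - p) * z + p * t) * ((x - t) ^ (1 - α) * (z - x) ^ (α - 2))
        + C * p * ((x - t) ^ (2 - α) * (z - x) ^ (α - 2)) := by
    intro x hx
    rw [uIcc_of_le htz.le] at hx
    have hpow : (x - t) ^ (2 - α) = (x - t) * (x - t) ^ (1 - α) := by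
      rw [← Real.rpow_one_add' (sub_nonneg.2 hx.1) (by linarith [hα.2])]
      ring_nf
    rw [volterraKernel_eq hx.2, hpow]
    ring
  have hint : ∀ r : ℝ, -1 < r →
      IntervalIntegrable (fun x => (x - t) ^ r * (z - x) ^ (α - 2)) volume t z :=
    fun r hr => intervalIntegrable_sub_rpow_mul_sub_rpow hr (by linarith [hα.1]) htz
  rw [intervalIntegral.integral_congr hsplit, intervalIntegral.integral_add
    ((hint _ (by linarith [hα.2])).const_mul _) ((hint _ (by linarith [hα.2])).const_mul _),
    intervalIntegral.integral_const_mul, intervalIntegral.integral_const_mul,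
    integral_sub_rpow_one_sub_mul_sub_rpow hα htz, integral_sub_rpow_two_sub_mul_sub_rpow hα htz]
  have hΓ : Real.Gamma α = (α - 1) * Real.Gamma (α - 1) := by
    rw [← Real.Gamma_add_one (by linarith [hα.1]), sub_add_cancel]
  rcases eq_or_ne c 0 with rfl | hc
  · simp [C]
  · have := (Real.Gamma_pos_of_pos (sub_pos.2 hα.1)).ne'
    have := (Real.Gamma_pos_of_pos (sub_pos.2 hα.2)).ne'
    have := (sub_pos.2 hα.1).ne'
    simp only [C, hΓ]
    field_simp
    ring

theorem exists_abs_volterraKernel_le (z : ℝ) :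
    ∃ Q, ∀ x ∈ Icc 0 z, |volterraKernel α p c z x| ≤ Q * (z - x) ^ (α - 2) := by
  refine ⟨|(α - 1) / (c * Real.Gamma α * Real.Gamma (2 - α))| * ((|α - 1 - p| + |p|) * z),
    fun x hx => ?_⟩
  have hq : |(α - 1 - p) * z + p * x| ≤ (|α - 1 - p| + |p|) * z := by
    calc |(α - 1 - p) * z + p * x| ≤ |α - 1 - p| * z + |p| * x := by
          refine (abs_add_le _ _).trans ?_
          rw [abs_mul, abs_mul, abs_of_nonneg (hx.1.trans hx.2), abs_of_nonneg hx.1]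
      _ ≤ (|α - 1 - p| + |p|) * z := by nlinarith [abs_nonneg p, hx.2]
  rw [volterraKernel_eq hx.2, abs_mul, abs_mul,
    abs_of_nonneg (Real.rpow_nonneg (sub_nonneg.2 hx.2) _)]
  gcongr
  exact Real.rpow_nonneg (sub_nonneg.2 hx.2) _

theorem integral_volterraKernel_mul_integral {g : ℝ → ℝ} (hα : α ∈ Ioo 1 2) (hz : 0 < z)
    (hg : IntervalIntegrable g volume 0 z) :
    ∫ x in 0..z, volterraKernel α p c z x * ∫ t in 0..x, g t * (x - t) ^ (1 - α)
      = (α - 1) / c * ∫ t in 0..z, (z - p * (z - t)) * g t := by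
  obtain ⟨Q, hQ⟩ := exists_abs_volterraKernel_le (α := α) (p := p) (c := c) z
  have hk : Measurable
      (Function.uncurry fun x t => volterraKernel α p c z x * (x - t) ^ (1 - α)) := by
    unfold volterraKernel
    fun_prop
  have hkw : ∀ t ∈ Ioo 0 z, ∀ x ∈ Ioc t z, |volterraKernel α p c z x * (x - t) ^ (1 - α)|
      ≤ Q * ((x - t) ^ (1 - α) * (z - x) ^ (α - 2)) := by
    intro t ht x hx
    have hxt : 0 ≤ (x - t) ^ (1 - α) := Real.rpow_nonneg (sub_nonneg.2 hx.1.le) _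
    rw [abs_mul, abs_of_nonneg hxt]
    calc |volterraKernel α p c z x| * (x - t) ^ (1 - α)
        ≤ Q * (z - x) ^ (α - 2) * (x - t) ^ (1 - α) :=
          mul_le_mul_of_nonneg_right (hQ x ⟨ht.1.le.trans hx.1.le, hx.2⟩) hxt
      _ = Q * ((x - t) ^ (1 - α) * (z - x) ^ (α - 2)) := by ring
  have hw_int : ∀ t ∈ Ioo 0 z,
      IntegrableOn (fun x => Q * ((x - t) ^ (1 - α) * (z - x) ^ (α - 2))) (Ioc t z) := fun t ht =>
    (intervalIntegrable_iff_integrableOn_Ioc_of_le ht.2.le).1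
      ((intervalIntegrable_sub_rpow_mul_sub_rpow (by linarith [hα.2]) (by linarith [hα.1])
        ht.2).const_mul Q)
  have hw_eq : ∀ t ∈ Ioo 0 z, ∫ x in Ioc t z, Q * ((x - t) ^ (1 - α) * (z - x) ^ (α - 2))
      = Q * (Real.Gamma (2 - α) * Real.Gamma (α - 1)) := fun t ht => by
    rw [← intervalIntegral.integral_of_le ht.2.le, intervalIntegral.integral_const_mul,
      integral_sub_rpow_one_sub_mul_sub_rpow hα ht.2]
  have hne : ∀ᵐ t, t ∈ uIoc 0 z → t < z := by
    filter_upwards [measure_singleton z |> compl_mem_ae_iff.mpr] with t ht htz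
    rw [uIoc_of_le hz.le] at htz
    exact lt_of_le_of_ne htz.2 ht
  calc ∫ x in 0..z, volterraKernel α p c z x * ∫ t in 0..x, g t * (x - t) ^ (1 - α)
      = ∫ x in 0..z, ∫ t in 0..x, volterraKernel α p c z x * (x - t) ^ (1 - α) * g t := by
        refine intervalIntegral.integral_congr fun x _ => ?_
        simp only [← intervalIntegral.integral_const_mul]
        congr 1
        ext t
        ring
    _ = ∫ t in 0..z, (∫ x in t..z, volterraKernel α p c z x * (x - t) ^ (1 - α)) * g t :=
        integral_integral_mul_swap hz.le hk
          ((intervalIntegrable_iff_integrableOn_Ioc_of_le hz.le).1 hg) hkw hw_int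
          (fun t ht => (hw_eq t ht).le)
    _ = ∫ t in 0..z, (α - 1) / c * ((z - p * (z - t)) * g t) := by
        refine intervalIntegral.integral_congr_ae (hne.mono fun t ht hmem => ?_)
        rw [integral_volterraKernel_mul_rpow hα (ht hmem)]
        ring
    _ = (α - 1) / c * ∫ t in 0..z, (z - p * (z - t)) * g t :=
        intervalIntegral.integral_const_mul _ _

end VolterraKernel

namespace MemS

variable {α b z : ℝ} {F : ℝ → ℝ}

theorem intervalIntegrable_deriv_deriv (hF : MemS α b F) (hα : 1 < α) (hz : z ∈ Ioc 0 b) :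
    IntervalIntegrable (deriv (deriv F)) volume 0 z := by
  obtain ⟨-, -, -, hF''_cont, hF''_isBigO, -⟩ := hF
  exact intervalIntegrable_of_isBigO_rpow (by linarith) hz.1
    (hF''_cont.mono (Ioc_subset_Ioc_right hz.2)) hF''_isBigO

theorem integral_deriv_deriv (hF : MemS α b F) (hα : 1 < α) (hz : z ∈ Ioc 0 b) :
    ∫ t in 0..z, deriv (deriv F) t = deriv F z := by
  have hint := hF.intervalIntegrable_deriv_deriv hα hz
  obtain ⟨-, hF'_cont, hF'_diff, -, -, hF'_zero⟩ := hF
  rw [intervalIntegral.integral_eq_sub_of_hasDerivAt_of_le hz.1.le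
    (hF'_cont.mono (Icc_subset_Icc_right hz.2))
    (fun x hx => (hF'_diff x ⟨hx.1, hx.2.le.trans hz.2⟩).hasDerivAt) hint, hF'_zero, sub_zero]

theorem integral_sub_mul_deriv_deriv (hF : MemS α b F) (hα : 1 < α) (hz : z ∈ Ioc 0 b) :
    ∫ t in 0..z, (z - t) * deriv (deriv F) t = F z - F 0 := by
  have hint := hF.intervalIntegrable_deriv_deriv hα hz
  obtain ⟨hF_diff, hF'_cont, hF'_diff, -, -, hF'_zero⟩ := hF
  rw [_root_.integral_sub_mul_deriv_deriv hz.1.le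
    (fun x hx => hF_diff x (Icc_subset_Icc_right hz.2 hx))
    (hF'_cont.mono (Icc_subset_Icc_right hz.2))
    (fun x hx => hF'_diff x ⟨hx.1, hx.2.le.trans hz.2⟩) hint, hF'_zero]
  ring

end MemS

theorem reduction_to_volterra_equation_general
    {α p c b a₀ : ℝ} (hα : α ∈ Set.Ioo (1:ℝ) 2)
    (hc : 0 < c) {F : ℝ → ℝ}
    (hF : MemS α b F)
    (hFeq : ∀ z ∈ Set.Ioc (0:ℝ) b, FracDE α p c F z)
    (hF0 : F 0 = a₀) :
    let φ : ℝ → ℝ := fun z => ∫ t in (0:ℝ)..z, deriv (deriv F) t * (z - t) ^ (1 - α)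
    let K : ℝ → ℝ → ℝ := fun z x =>
      ((α - 1) / (c * Real.Gamma α * Real.Gamma (2 - α))) *
        (((α - 1 - p) * z + p * x) / (z - x) ^ (2 - α))
    ∀ z ∈ Set.Ioc (0:ℝ) b,
      (∫ x in (0:ℝ)..z, K z x * φ x) + φ z = p * (α - 1) * a₀ / c := by
  intro φ K z hz
  have hF''_int := hF.intervalIntegrable_deriv_deriv hα.1 hz
  have hmoment : ∫ t in 0..z, (z - p * (z - t)) * deriv (deriv F) t
      = z * deriv F z - p * (F z - a₀) := by
    have hsplit : (fun t => (z - p * (z - t)) * deriv (deriv F) t)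
        = fun t => z * deriv (deriv F) t - p * ((z - t) * deriv (deriv F) t) := by
      ext t
      ring
    rw [hsplit, intervalIntegral.integral_sub (hF''_int.const_mul z)
        ((hF''_int.continuousOn_mul (by fun_prop)).const_mul p),
      intervalIntegral.integral_const_mul, intervalIntegral.integral_const_mul,
      hF.integral_deriv_deriv hα.1 hz, hF.integral_sub_mul_deriv_deriv hα.1 hz, hF0]
  have hφz : φ z = (α - 1) / c * (p * F z - z * deriv F z) := by
    have h : z * deriv F z + c / (α - 1) * φ z - p * F z = 0 := hFeq z hz
    have : α - 1 ≠ 0 := (sub_pos.2 hα.1).ne'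
    field_simp at h ⊢
    linarith
  change (∫ x in 0..z, volterraKernel α p c z x * φ x) + φ z = _
  rw [integral_volterraKernel_mul_integral hα hz.1 hF''_int, hmoment, hφz]
  field_simp
  ring

theorem reduction_to_volterra_equation
    {α p c b a₀ : ℝ} (hα : α ∈ Set.Ioo (1:ℝ) 2) (hp : p ∈ Set.Ioo 1 α)
    (hc : 0 < c) (hb : 0 < b) {F : ℝ → ℝ}
    (hF : MemS α b F)
    (hFeq : ∀ z ∈ Set.Ioc (0:ℝ) b, FracDE α p c F z)
    (hF0 : F 0 = a₀) :
    let φ : ℝ → ℝ := fun z => ∫ t in (0:ℝ)..z, deriv (deriv F) t * (z - t) ^ (1 - α)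
    let K : ℝ → ℝ → ℝ := fun z x =>
      ((α - 1) / (c * Real.Gamma α * Real.Gamma (2 - α))) *
        (((α - 1 - p) * z + p * x) / (z - x) ^ (2 - α))
    ∀ z ∈ Set.Ioc (0:ℝ) b,
      (∫ x in (0:ℝ)..z, K z x * φ x) + φ z = p * (α - 1) * a₀ / c :=
  reduction_to_volterra_equation_general hα hc hF hFeq hF0
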